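/- arXiv:1112.4292 — 4 statements merged into one kernel-verified Lean document; each statement's English description precedes it below -/
import Mathlib

section
/- Let α < 1/2 and let k : {(t,s) : 0 < s < t} → [0,∞) satisfy k(t,s) ≤ C/(t−s). Then the integral operator f ↦ (t ↦ ∫₀^t k(t,s) |t^α − s^α| s^{−α} f(s) ds) is bounded on L²((0,∞), dt); i.e. there is C' with ∫₀^∞ (∫₀^t k(t,s)|t^α − s^α| s^{−α} f(s) ds)² dt ≤ C' ∫₀^∞ f(s)² ds for all nonnegative measurable f. -/
open MeasureTheory Set
open scoped ENNReal

/-!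
With `a := max α 0 < 1/2`, the elementary bound
`|t^α - s^α| s^(-α) ≤ max 1 (-α) * (t - s) t^(a-1) s^(-a)` turns `k(t,s) ≤ C/(t-s)` into domination
of the operator by `C * max 1 (-α)` times the Hardy-type operator `f ↦ t^(a-1) ∫₀^t s^(-a) f(s) ds`.
That operator is bounded on `L²` with norm at most `1/(1/2 - a)`: Cauchy–Schwarz against the weight
`s^(-a-1/2)` gives `(∫₀^t s^(-a) f)² ≤ t^(1/2-a)/(1/2-a) ∫₀^t s^(1/2-a) f²`, and after Tonelli the
inner integral `∫ₛ^∞ t^(a-3/2) dt = s^(a-1/2)/(1/2-a)` cancels the weight `s^(1/2-a)`.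
-/

lemma rpow_sub_rpow_le_mul_rpow_sub_one {s t α : ℝ} (hs : 0 < s) (hst : s ≤ t) (hα : α ≤ 1) :
    t ^ α - s ^ α ≤ (t - s) * t ^ (α - 1) := by
  have ht : 0 < t := hs.trans_le hst
  have hle : t ^ (α - 1) ≤ s ^ (α - 1) := Real.rpow_le_rpow_of_nonpos hs hst (by linarith)
  have hs' : s * s ^ (α - 1) = s ^ α := by rw [Real.rpow_sub_one hs.ne', mul_div_cancel₀ _ hs.ne']
  have ht' : t * t ^ (α - 1) = t ^ α := by rw [Real.rpow_sub_one ht.ne', mul_div_cancel₀ _ ht.ne']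
  nlinarith [mul_le_mul_of_nonneg_left hle hs.le]

lemma one_sub_rpow_le_max_mul {x β : ℝ} (hx0 : 0 < x) (hx1 : x ≤ 1) :
    1 - x ^ β ≤ max 1 β * (1 - x) := by
  rcases le_total β 1 with hβ1 | hβ1
  · have : x ≤ x ^ β := by simpa using Real.rpow_le_rpow_of_exponent_ge hx0 hx1 hβ1
    nlinarith [le_max_left 1 β]
  · have := one_add_mul_self_le_rpow_one_add (s := x - 1) (by linarith) hβ1
    rw [add_sub_cancel] at this
    nlinarith [le_max_right 1 β]

lemma abs_rpow_sub_rpow_mul_rpow_neg_le {s t α : ℝ} (hs : 0 < s) (hst : s ≤ t) (hα : α ≤ 1) :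
    |t ^ α - s ^ α| * s ^ (-α) ≤
      max 1 (-α) * ((t - s) * t ^ (max α 0 - 1) * s ^ (-max α 0)) := by
  have ht : 0 < t := hs.trans_le hst
  rcases le_total 0 α with hα0 | hα0
  · rw [max_eq_left hα0, abs_of_nonneg (by linarith [Real.rpow_le_rpow hs.le hst hα0])]
    calc (t ^ α - s ^ α) * s ^ (-α) ≤ (t - s) * t ^ (α - 1) * s ^ (-α) := by
          gcongr; exact rpow_sub_rpow_le_mul_rpow_sub_one hs hst hα
      _ ≤ _ := le_mul_of_one_le_left (by positivity) (le_max_left _ _)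
  · have hts : t ^ α ≤ s ^ α := Real.rpow_le_rpow_of_nonpos hs hst hα0
    have hratio : t ^ α * s ^ (-α) = (s / t) ^ (-α) := by
      rw [Real.div_rpow hs.le ht.le, Real.rpow_neg ht.le, div_inv_eq_mul, mul_comm]
    rw [max_eq_right hα0, abs_of_nonpos (by linarith), neg_sub, sub_mul,
      ← Real.rpow_add hs, add_neg_cancel, Real.rpow_zero, hratio, neg_zero, Real.rpow_zero,
      mul_one, zero_sub, Real.rpow_neg_one, ← div_eq_mul_inv, sub_div, div_self ht.ne']
    exact one_sub_rpow_le_max_mul (div_pos hs ht) ((div_le_one ht).2 hst)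

lemma mul_abs_rpow_sub_rpow_mul_rpow_neg_le {s t α K C : ℝ} (hs : 0 < s) (hst : s < t)
    (hα : α ≤ 1) (hK₀ : 0 ≤ K) (hK : K ≤ C / (t - s)) :
    K * |t ^ α - s ^ α| * s ^ (-α) ≤
      C * max 1 (-α) * (t ^ (max α 0 - 1) * s ^ (-max α 0)) := by
  have hts : 0 < t - s := sub_pos.2 hst
  calc K * |t ^ α - s ^ α| * s ^ (-α) ≤ C / (t - s) * (|t ^ α - s ^ α| * s ^ (-α)) := by
        rw [mul_assoc]; gcongr
    _ ≤ C / (t - s) * (max 1 (-α) * ((t - s) * t ^ (max α 0 - 1) * s ^ (-max α 0))) :=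
        mul_le_mul_of_nonneg_left (abs_rpow_sub_rpow_mul_rpow_neg_le hs hst.le hα) (hK₀.trans hK)
    _ = _ := by field_simp

lemma ofReal_rpow_mul_ofReal_rpow {s : ℝ} (hs : 0 < s) (p q : ℝ) :
    ENNReal.ofReal (s ^ p) * ENNReal.ofReal (s ^ q) = ENNReal.ofReal (s ^ (p + q)) := by
  rw [← ENNReal.ofReal_mul (by positivity), Real.rpow_add hs]

lemma ofReal_rpow_sq {s : ℝ} (hs : 0 ≤ s) (p : ℝ) :
    ENNReal.ofReal (s ^ p) ^ 2 = ENNReal.ofReal (s ^ (2 * p)) := by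
  rw [← ENNReal.ofReal_pow (by positivity), ← Real.rpow_natCast, ← Real.rpow_mul hs, mul_comm]
  norm_num

lemma lintegral_Ioo_rpow {r t : ℝ} (hr : -1 < r) (ht : 0 < t) :
    ∫⁻ s in Ioo 0 t, ENNReal.ofReal (s ^ r) = ENNReal.ofReal (t ^ (r + 1) / (r + 1)) := by
  rw [← ofReal_integral_eq_lintegral_ofReal
    ((intervalIntegral.integrableOn_Ioo_rpow_iff ht).2 hr)
    ((ae_restrict_iff' measurableSet_Ioo).2 (ae_of_all _ fun s hs => Real.rpow_nonneg hs.1.le _)),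
    ← integral_Ioc_eq_integral_Ioo, ← intervalIntegral.integral_of_le ht.le,
    integral_rpow (Or.inl hr), Real.zero_rpow (by linarith), sub_zero]

lemma lintegral_Ioi_rpow {r s : ℝ} (hr : r < -1) (hs : 0 < s) :
    ∫⁻ t in Ioi s, ENNReal.ofReal (t ^ r) = ENNReal.ofReal (-s ^ (r + 1) / (r + 1)) := by
  rw [← ofReal_integral_eq_lintegral_ofReal (integrableOn_Ioi_rpow_of_lt hr hs)
    ((ae_restrict_iff' measurableSet_Ioi).2
      (ae_of_all _ fun t ht => Real.rpow_nonneg (hs.trans ht).le _)),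
    integral_Ioi_rpow_of_lt hr hs]

lemma lintegral_Ioi_lintegral_Ioo_swap {μ : Measure ℝ} [SFinite μ] {G : ℝ → ℝ → ℝ≥0∞}
    (hG : Measurable (Function.uncurry G)) :
    ∫⁻ t in Ioi 0, ∫⁻ s in Ioo 0 t, G t s ∂μ ∂μ = ∫⁻ s in Ioi 0, ∫⁻ t in Ioi s, G t s ∂μ ∂μ := by
  set H : ℝ → ℝ → ℝ≥0∞ := fun t s => if s < t then G t s else 0
  have hH : Measurable (Function.uncurry H) :=
    Measurable.ite (measurableSet_lt measurable_snd measurable_fst) hG measurable_const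
  have hleft : ∀ t, ∫⁻ s in Ioo 0 t, G t s ∂μ = ∫⁻ s in Ioi 0, H t s ∂μ := fun t => by
    rw [← Ioi_inter_Iio, inter_comm, ← Measure.restrict_restrict measurableSet_Iio,
      ← lintegral_indicator measurableSet_Iio]
    rfl
  have hright : ∀ s ∈ Ioi (0 : ℝ), ∫⁻ t in Ioi s, G t s ∂μ = ∫⁻ t in Ioi 0, H t s ∂μ :=
    fun s hs => by
    rw [← inter_eq_left.2 (Ioi_subset_Ioi (le_of_lt hs)),
      ← Measure.restrict_restrict measurableSet_Ioi, ← lintegral_indicator measurableSet_Ioi]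
    rfl
  simp_rw [hleft]
  rw [lintegral_lintegral_swap hH.aemeasurable, setLIntegral_congr_fun measurableSet_Ioi hright]

lemma lintegral_mul_sq_le {β : Type*} [MeasurableSpace β] {μ : Measure β} {f g : β → ℝ≥0∞}
    (hf : AEMeasurable f μ) (hg : AEMeasurable g μ) :
    (∫⁻ x, f x * g x ∂μ) ^ 2 ≤ (∫⁻ x, f x ^ 2 ∂μ) * ∫⁻ x, g x ^ 2 ∂μ := by
  have h := ENNReal.lintegral_mul_le_Lp_mul_Lq μ Real.HolderConjugate.two_two hf hg
  have hsq : ∀ X : ℝ≥0∞, (X ^ (1 / 2 : ℝ)) ^ 2 = X := fun X => by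
    rw [← ENNReal.rpow_natCast, ← ENNReal.rpow_mul]; norm_num
  simp only [ENNReal.rpow_two] at h
  calc (∫⁻ x, f x * g x ∂μ) ^ 2
      ≤ ((∫⁻ x, f x ^ 2 ∂μ) ^ (1 / 2 : ℝ) * (∫⁻ x, g x ^ 2 ∂μ) ^ (1 / 2 : ℝ)) ^ 2 := by
        gcongr; exact h
    _ = _ := by rw [mul_pow, hsq, hsq]

lemma sq_lintegral_Ioo_rpow_mul_le {a t : ℝ} (ha : a < 1 / 2) (ht : 0 < t) {F : ℝ → ℝ≥0∞}
    (hF : Measurable F) :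
    (∫⁻ s in Ioo 0 t, ENNReal.ofReal (s ^ (-a)) * F s) ^ 2 ≤
      ENNReal.ofReal (t ^ (1 / 2 - a) / (1 / 2 - a)) *
        ∫⁻ s in Ioo 0 t, ENNReal.ofReal (s ^ (1 / 2 - a)) * F s ^ 2 := by
  have hsplit : ∀ s ∈ Ioo (0 : ℝ) t, ENNReal.ofReal (s ^ (-a)) * F s =
      ENNReal.ofReal (s ^ (-a / 2 - 1 / 4)) * (ENNReal.ofReal (s ^ (1 / 4 - a / 2)) * F s) :=
    fun s hs => by rw [← mul_assoc, ofReal_rpow_mul_ofReal_rpow hs.1]; ring_nf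
  have hsq₁ : ∀ s ∈ Ioo (0 : ℝ) t,
      ENNReal.ofReal (s ^ (-a / 2 - 1 / 4)) ^ 2 = ENNReal.ofReal (s ^ (-a - 1 / 2)) :=
    fun s hs => by rw [ofReal_rpow_sq hs.1.le]; ring_nf
  have hsq₂ : ∀ s ∈ Ioo (0 : ℝ) t, (ENNReal.ofReal (s ^ (1 / 4 - a / 2)) * F s) ^ 2 =
      ENNReal.ofReal (s ^ (1 / 2 - a)) * F s ^ 2 :=
    fun s hs => by rw [mul_pow, ofReal_rpow_sq hs.1.le]; ring_nf
  rw [setLIntegral_congr_fun measurableSet_Ioo hsplit]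
  refine (lintegral_mul_sq_le (by fun_prop) (by fun_prop)).trans_eq ?_
  rw [setLIntegral_congr_fun measurableSet_Ioo hsq₁, setLIntegral_congr_fun measurableSet_Ioo hsq₂,
    lintegral_Ioo_rpow (by linarith) ht]
  ring_nf

theorem lintegral_sq_hardy_le {a : ℝ} (ha : a < 1 / 2) {F : ℝ → ℝ≥0∞} (hF : Measurable F) :
    ∫⁻ t in Ioi 0,
        (ENNReal.ofReal (t ^ (a - 1)) * ∫⁻ s in Ioo 0 t, ENNReal.ofReal (s ^ (-a)) * F s) ^ 2
      ≤ ENNReal.ofReal (1 / (1 / 2 - a)) ^ 2 * ∫⁻ s in Ioi 0, F s ^ 2 := by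
  obtain ⟨c, hc0, hc⟩ : ∃ c, 0 < c ∧ 1 / 2 - a = c := ⟨1 / 2 - a, by linarith, rfl⟩
  set G : ℝ → ℝ → ℝ≥0∞ := fun t s =>
    ENNReal.ofReal (t ^ (a - 3 / 2)) * (ENNReal.ofReal (s ^ c) * F s ^ 2)
  have hG : Measurable (Function.uncurry G) := by fun_prop
  have hinner : ∀ t ∈ Ioi (0 : ℝ),
      (ENNReal.ofReal (t ^ (a - 1)) * ∫⁻ s in Ioo 0 t, ENNReal.ofReal (s ^ (-a)) * F s) ^ 2 ≤
        ENNReal.ofReal (1 / c) * ∫⁻ s in Ioo 0 t, G t s := fun t ht => by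
    have hpow : t ^ (2 * (a - 1)) * (t ^ c / c) = 1 / c * t ^ (a - 3 / 2) := by
      rw [mul_div_assoc', ← Real.rpow_add ht, ← hc]; ring_nf
    rw [mul_pow, ofReal_rpow_sq ht.le]
    grw [sq_lintegral_Ioo_rpow_mul_le ha ht hF]
    rw [hc, ← mul_assoc, ← ENNReal.ofReal_mul (Real.rpow_nonneg ht.le _), hpow,
      ENNReal.ofReal_mul (one_div_pos.2 hc0).le, mul_assoc,
      lintegral_const_mul' _ _ ENNReal.ofReal_ne_top]
  have houter : ∀ s ∈ Ioi (0 : ℝ), ∫⁻ t in Ioi s, G t s = ENNReal.ofReal (1 / c) * F s ^ 2 :=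
    fun s hs => by
    have hpow : -s ^ (a - 3 / 2 + 1) / (a - 3 / 2 + 1) * s ^ c = 1 / c := by
      rw [show a - 3 / 2 + 1 = -c by linarith, neg_div_neg_eq, Real.rpow_neg hs.le]
      field_simp [(Real.rpow_pos_of_pos hs c).ne']
    rw [lintegral_mul_const _ (by fun_prop), lintegral_Ioi_rpow (by linarith) hs, ← mul_assoc,
      ← ENNReal.ofReal_mul' (Real.rpow_nonneg hs.le _), hpow]
  calc _ ≤ ∫⁻ t in Ioi 0, ENNReal.ofReal (1 / c) * ∫⁻ s in Ioo 0 t, G t s :=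
        setLIntegral_mono' measurableSet_Ioi hinner
    _ = ENNReal.ofReal (1 / c) * ∫⁻ s in Ioi 0, ENNReal.ofReal (1 / c) * F s ^ 2 := by
        rw [lintegral_const_mul' _ _ ENNReal.ofReal_ne_top, lintegral_Ioi_lintegral_Ioo_swap hG,
          setLIntegral_congr_fun measurableSet_Ioi houter]
    _ = _ := by rw [lintegral_const_mul' _ _ ENNReal.ofReal_ne_top, ← mul_assoc, sq, hc]

lemma ofReal_sq_integral_le_sq_lintegral {β : Type*} [MeasurableSpace β] {μ : Measure β}
    {g : β → ℝ} {h : β → ℝ≥0∞} (hg : 0 ≤ᵐ[μ] g) (hgh : ∀ᵐ x ∂μ, ENNReal.ofReal (g x) ≤ h x) :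
    ENNReal.ofReal ((∫ x, g x ∂μ) ^ 2) ≤ (∫⁻ x, h x ∂μ) ^ 2 := by
  rw [ENNReal.ofReal_pow (integral_nonneg_of_ae hg)]
  gcongr
  calc ENNReal.ofReal (∫ x, g x ∂μ) = ‖∫ x, g x ∂μ‖ₑ :=
        (Real.enorm_of_nonneg (integral_nonneg_of_ae hg)).symm
    _ ≤ ∫⁻ x, ‖g x‖ₑ ∂μ := enorm_integral_le_lintegral_enorm g
    _ ≤ ∫⁻ x, h x ∂μ := lintegral_mono_ae <| by
        filter_upwards [hg, hgh] with x hx hxh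
        rwa [Real.enorm_of_nonneg hx]

lemma integral_le_of_lintegral_ofReal_le {β : Type*} [MeasurableSpace β] {μ : Measure β}
    {g : β → ℝ} (hg : 0 ≤ᵐ[μ] g) {b : ℝ} (hb : 0 ≤ b)
    (h : ∫⁻ x, ENNReal.ofReal (g x) ∂μ ≤ ENNReal.ofReal b) : ∫ x, g x ∂μ ≤ b := by
  rw [← ENNReal.ofReal_le_ofReal_iff hb, ← Real.enorm_of_nonneg (integral_nonneg_of_ae hg)]
  refine (enorm_integral_le_lintegral_enorm g).trans (le_trans (le_of_eq ?_) h)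
  exact lintegral_congr_ae (by filter_upwards [hg] with x hx using Real.enorm_of_nonneg hx)

lemma ofReal_sq_setIntegral_Ioo_le_hardy {α C t : ℝ} {K f : ℝ → ℝ} (hα : α ≤ 1) (ht : 0 < t)
    (hK₀ : ∀ s ∈ Ioo 0 t, 0 ≤ K s) (hK : ∀ s ∈ Ioo 0 t, K s ≤ C / (t - s))
    (hf : ∀ s, 0 ≤ f s) :
    ENNReal.ofReal ((∫ s in Ioo 0 t, K s * |t ^ α - s ^ α| * s ^ (-α) * f s) ^ 2) ≤
      ENNReal.ofReal (C * max 1 (-α)) ^ 2 * (ENNReal.ofReal (t ^ (max α 0 - 1)) *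
        ∫⁻ s in Ioo 0 t, ENNReal.ofReal (s ^ (-max α 0)) * ENNReal.ofReal (f s)) ^ 2 := by
  have hIoo : ∀ᵐ s ∂volume.restrict (Ioo 0 t), s ∈ Ioo 0 t := ae_restrict_mem measurableSet_Ioo
  refine (ofReal_sq_integral_le_sq_lintegral (h := fun s => ENNReal.ofReal (C * max 1 (-α)) *
      (ENNReal.ofReal (t ^ (max α 0 - 1)) *
        (ENNReal.ofReal (s ^ (-max α 0)) * ENNReal.ofReal (f s)))) ?_ ?_).trans_eq ?_
  · filter_upwards [hIoo] with s hs
    exact mul_nonneg (mul_nonneg (mul_nonneg (hK₀ s hs) (abs_nonneg _))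
      (Real.rpow_nonneg hs.1.le _)) (hf s)
  · filter_upwards [hIoo] with s hs
    have hs₀ : 0 ≤ s ^ (-max α 0) * f s := mul_nonneg (Real.rpow_nonneg hs.1.le _) (hf s)
    rw [← ENNReal.ofReal_mul (Real.rpow_nonneg hs.1.le _),
      ← ENNReal.ofReal_mul (Real.rpow_nonneg ht.le _),
      ← ENNReal.ofReal_mul' (mul_nonneg (Real.rpow_nonneg ht.le _) hs₀), ← mul_assoc, ← mul_assoc,
      mul_assoc (C * _)]
    exact ENNReal.ofReal_le_ofReal (mul_le_mul_of_nonneg_right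
      (mul_abs_rpow_sub_rpow_mul_rpow_neg_le hs.1 hs.2 hα (hK₀ s hs) (hK s hs)) (hf s))
  · rw [lintegral_const_mul' _ _ ENNReal.ofReal_ne_top,
      lintegral_const_mul' _ _ ENNReal.ofReal_ne_top, mul_pow]

/-- Schur-test estimate: for `α < 1/2` and a kernel `k(t,s) ≤ C/(t−s)` on
`0 < s < t`, the operator `f ↦ ∫₀^t k(t,s) |t^α − s^α| s^{−α} f(s) ds`
is bounded on `L²((0,∞), dt)`. -/
theorem stmt_2 (α : ℝ) (hα : α < 1 / 2) (C : ℝ) (k : ℝ → ℝ → ℝ)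
    (hk0 : ∀ t s, 0 < s → s < t → 0 ≤ k t s)
    (hk : ∀ t s, 0 < s → s < t → k t s ≤ C / (t - s)) :
    ∃ C' : ℝ, 0 < C' ∧ ∀ f : ℝ → ℝ, Measurable f → (∀ s, 0 ≤ f s) →
      IntegrableOn (fun s => (f s) ^ 2) (Ioi 0) →
      ∫ t in Ioi (0:ℝ),
          (∫ s in Ioo (0:ℝ) t, k t s * |t ^ α - s ^ α| * s ^ (-α) * f s) ^ 2
        ≤ C' * ∫ s in Ioi (0:ℝ), (f s) ^ 2 := by
  have hC : 0 ≤ C := by linarith [(hk0 2 1 one_pos one_lt_two).trans (hk 2 1 one_pos one_lt_two)]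
  set a := max α 0
  set B := C * max 1 (-α)
  have hB : 0 ≤ B := mul_nonneg hC (zero_le_one.trans (le_max_left _ _))
  have ha : a < 1 / 2 := max_lt hα one_half_pos
  refine ⟨(B / (1 / 2 - a)) ^ 2 + 1, by positivity, fun f hf hf0 hfint => ?_⟩
  have hR : ∫⁻ s in Ioi 0, ENNReal.ofReal (f s) ^ 2 = ENNReal.ofReal (∫ s in Ioi 0, f s ^ 2) := by
    rw [ofReal_integral_eq_lintegral_ofReal hfint (ae_of_all _ fun s => sq_nonneg _)]
    simp_rw [ENNReal.ofReal_pow (hf0 _)]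
  have hR0 : 0 ≤ ∫ s in Ioi 0, f s ^ 2 :=
    setIntegral_nonneg measurableSet_Ioi fun s _ => sq_nonneg _
  refine integral_le_of_lintegral_ofReal_le (ae_of_all _ fun t => sq_nonneg _)
    (mul_nonneg (by positivity) hR0) ?_
  calc _ ≤ ∫⁻ t in Ioi 0, ENNReal.ofReal B ^ 2 * (ENNReal.ofReal (t ^ (a - 1)) *
          ∫⁻ s in Ioo 0 t, ENNReal.ofReal (s ^ (-a)) * ENNReal.ofReal (f s)) ^ 2 :=
        setLIntegral_mono' measurableSet_Ioi fun t ht => ofReal_sq_setIntegral_Ioo_le_hardy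
          (by linarith) ht (fun s hs => hk0 t s hs.1 hs.2) (fun s hs => hk t s hs.1 hs.2) hf0
    _ ≤ ENNReal.ofReal B ^ 2 * (ENNReal.ofReal (1 / (1 / 2 - a)) ^ 2 *
          ∫⁻ s in Ioi 0, ENNReal.ofReal (f s) ^ 2) := by
        rw [lintegral_const_mul' _ _ (by finiteness)]
        gcongr
        exact lintegral_sq_hardy_le ha (by fun_prop)
    _ = ENNReal.ofReal ((B / (1 / 2 - a)) ^ 2 * ∫ s in Ioi 0, f s ^ 2) := by
        rw [hR, ← mul_assoc, ← mul_pow, ← ENNReal.ofReal_mul hB, mul_one_div,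
          ← ENNReal.ofReal_pow (div_nonneg hB (by linarith)), ← ENNReal.ofReal_mul (sq_nonneg _)]
    _ ≤ _ := ENNReal.ofReal_le_ofReal (mul_le_mul_of_nonneg_right (by linarith) hR0)
end

section
/- Let m be a positive integer, β a real number and 0 < p < ∞. The map j defined by j(f)(t,y) = √m · t^{m(1+β)/2} f(t^m, y) is an isometry from T^{p,2,m}(t^β dt dy) onto T^{p,2,1}(t^{−1} dt dy); in particular ‖j(f)‖_{T^{p,2,1}(t^{-1}dtdy)} = ‖f‖_{T^{p,2,m}(t^β dtdy)} for all f. -/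
/-!
Substituting `t = s ^ m` in the time integral of the area functional turns the aperture
`t ^ (1/m)` into `s` and the measure `t ^ (-n/m) t ^ β dt` into `m s ^ (m(1+β) - 1) s ^ (-n) ds`,
which is `s ^ (-n) · (√m s ^ (m(1+β)/2)) ^ 2 · s ^ (-1) ds`. So the area functionals of `f` and
`j f` agree at every base point, and hence so do the tent norms.
-/

open MeasureTheory Set

/-- The tent space quasi-norm `‖g‖_{T^{p,2,m}(t^β dt dy)}` (valued in `ℝ≥0∞`). -/
noncomputable def tentNorm (n : ℕ) (p : ℝ) (m : ℕ) (β : ℝ)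
    (g : ℝ → EuclideanSpace ℝ (Fin n) → ℝ) : ENNReal :=
  (∫⁻ x : EuclideanSpace ℝ (Fin n),
      (∫⁻ t in Ioi (0:ℝ), ∫⁻ y : EuclideanSpace ℝ (Fin n),
        (Metric.ball x (t ^ (1 / (m:ℝ)))).indicator
          (fun y => ENNReal.ofReal (t ^ (-(n:ℝ) / (m:ℝ)) * (g t y) ^ 2 * t ^ β)) y)
        ^ (p / 2)) ^ (1 / p)

theorem image_pow_Ioi_zero {k : ℕ} (hk : k ≠ 0) : (fun s : ℝ => s ^ k) '' Ioi 0 = Ioi 0 := by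
  refine Subset.antisymm ?_ fun t ht => ?_
  · rintro _ ⟨s, hs, rfl⟩
    exact pow_pos (mem_Ioi.1 hs) k
  · exact ⟨t ^ (k : ℝ)⁻¹, Real.rpow_pos_of_pos ht _, Real.rpow_inv_natCast_pow ht.le hk⟩

theorem lintegral_comp_pow_Ioi {k : ℕ} (hk : k ≠ 0) (g : ℝ → ENNReal) :
    ∫⁻ s in Ioi 0, ENNReal.ofReal (k * s ^ (k - 1)) * g (s ^ k) = ∫⁻ t in Ioi 0, g t := by
  have hinj : InjOn (fun s : ℝ => s ^ k) (Ioi 0) :=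
    (pow_left_strictMonoOn₀ hk).injOn.mono fun _ hs => le_of_lt hs
  conv_rhs => rw [← image_pow_Ioi_zero hk]
  rw [lintegral_image_eq_lintegral_abs_deriv_mul measurableSet_Ioi
    (fun s _ => (hasDerivAt_pow k s).hasDerivWithinAt) hinj]
  refine (setLIntegral_congr_fun measurableSet_Ioi fun s (hs : 0 < s) => ?_).symm
  rw [abs_of_nonneg (by positivity : (0 : ℝ) ≤ k * s ^ (k - 1))]

noncomputable def tentArea (n : ℕ) (m : ℕ) (β : ℝ) (g : ℝ → EuclideanSpace ℝ (Fin n) → ℝ)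
    (x : EuclideanSpace ℝ (Fin n)) : ENNReal :=
  ∫⁻ t in Ioi (0:ℝ), ∫⁻ y : EuclideanSpace ℝ (Fin n),
    (Metric.ball x (t ^ (1 / (m:ℝ)))).indicator
      (fun y => ENNReal.ofReal (t ^ (-(n:ℝ) / (m:ℝ)) * (g t y) ^ 2 * t ^ β)) y

theorem tentNorm_eq_tentArea (n : ℕ) (p : ℝ) (m : ℕ) (β : ℝ)
    (g : ℝ → EuclideanSpace ℝ (Fin n) → ℝ) :
    tentNorm n p m β g = (∫⁻ x, tentArea n m β g x ^ (p / 2)) ^ (1 / p) :=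
  rfl

theorem tentArea_one (n : ℕ) (β : ℝ) (g : ℝ → EuclideanSpace ℝ (Fin n) → ℝ)
    (x : EuclideanSpace ℝ (Fin n)) :
    tentArea n 1 β g x = ∫⁻ t in Ioi (0:ℝ), ∫⁻ y : EuclideanSpace ℝ (Fin n),
      (Metric.ball x t).indicator (fun y => ENNReal.ofReal (t ^ (-(n:ℝ)) * (g t y) ^ 2 * t ^ β)) y := by
  simp only [tentArea, Nat.cast_one, div_one, Real.rpow_one]

theorem jacobian_mul_weight_eq_rescale {m : ℕ} (hm : m ≠ 0) (n β : ℝ) {s : ℝ} (hs : 0 < s) (a : ℝ) :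
    m * s ^ (m - 1) * ((s ^ m) ^ (-n / m) * a ^ 2 * (s ^ m) ^ β)
      = s ^ (-n) * (Real.sqrt m * s ^ (m * (1 + β) / 2) * a) ^ 2 * s ^ (-1 : ℝ) := by
  have hsqrt : Real.sqrt m ^ 2 = m := Real.sq_sqrt (Nat.cast_nonneg m)
  rw [← Real.rpow_natCast_mul hs.le, ← Real.rpow_natCast_mul hs.le, mul_pow, mul_pow, hsqrt,
    ← Real.rpow_mul_natCast hs.le, ← Real.rpow_natCast, Nat.cast_sub (Nat.one_le_iff_ne_zero.2 hm)]
  have key : s ^ ((m : ℝ) - (1 : ℕ)) * (s ^ ((m : ℝ) * (-n / m)) * s ^ ((m : ℝ) * β))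
      = s ^ (-n) * s ^ ((m : ℝ) * (1 + β) / 2 * (2 : ℕ)) * s ^ (-1 : ℝ) := by
    simp only [← Real.rpow_add hs]
    congr 1
    field_simp
    push_cast
    ring
  linear_combination (m * a ^ 2) * key

theorem tentArea_rescale {n m : ℕ} (hm : m ≠ 0) (β : ℝ) (f : ℝ → EuclideanSpace ℝ (Fin n) → ℝ)
    (x : EuclideanSpace ℝ (Fin n)) :
    tentArea n 1 (-1) (fun t y => Real.sqrt m * t ^ (m * (1 + β) / 2) * f (t ^ m) y) x
      = tentArea n m β f x := by
  rw [tentArea_one, tentArea]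
  conv_rhs => rw [← lintegral_comp_pow_Ioi hm]
  refine setLIntegral_congr_fun measurableSet_Ioi fun s (hs : 0 < s) => ?_
  rw [one_div, Real.pow_rpow_inv_natCast hs.le hm, ← lintegral_const_mul' _ _ ENNReal.ofReal_ne_top]
  refine lintegral_congr fun y => ?_
  rw [← indicator_mul_right _ (fun _ => ENNReal.ofReal (m * s ^ (m - 1)))]
  simp only [← ENNReal.ofReal_mul (by positivity : (0 : ℝ) ≤ m * s ^ (m - 1)),
    jacobian_mul_weight_eq_rescale hm n β hs]

theorem stmt_4_general (n : ℕ) (m : ℕ) (hm : 0 < m) (β p : ℝ)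
    (f : ℝ → EuclideanSpace ℝ (Fin n) → ℝ) :
    tentNorm n p 1 (-1)
        (fun t y => Real.sqrt m * t ^ ((m * (1 + β)) / 2) * f (t ^ (m:ℕ)) y)
      = tentNorm n p m β f := by
  simp only [tentNorm_eq_tentArea, tentArea_rescale hm.ne']

/-- The map `j(f)(t,y) = √m · t^{m(1+β)/2} f(t^m, y)` is an isometry from
`T^{p,2,m}(t^β dt dy)` onto `T^{p,2,1}(t^{−1} dt dy)`. -/
theorem stmt_4 (n : ℕ) (m : ℕ) (hm : 0 < m) (β p : ℝ) (hp : 0 < p)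
    (f : ℝ → EuclideanSpace ℝ (Fin n) → ℝ)
    (hf : Measurable (Function.uncurry f)) :
    tentNorm n p 1 (-1)
        (fun t y => Real.sqrt m * t ^ ((m * (1 + β)) / 2) * f (t ^ (m:ℕ)) y)
      = tentNorm n p m β f :=
  stmt_4_general n m hm β p f
end

section
/- Let ν ∈ (0, π/2), z ∈ ℂ with |arg z| ≤ ν, Re z > 0, and α ∈ ℂ with Re α = a > 0. Then the operator M_z on L²((0,∞), dt; ℂ) defined by M_z f(t) = ∫₀^t (t−s)^{α−1} z^α e^{−(t−s)z} f(s) ds is bounded with operator norm at most Γ(a) e^{ν |Im α|} (cos ν)^{−a}. -/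
/-!
`M_z` is the causal convolution `f ↦ ∫₀ᵗ k(t - s) f(s) ds` with `k(u) = u^{α-1} z^α e^{-uz}`.
By the Schur test (Cauchy–Schwarz against the kernel, then Tonelli) its `L²` operator norm is at
most `‖k‖_{L¹(0,∞)}`. Since `|z^α| ≤ |z|^a e^{ν|Im α|}` and `Re z ≥ |z| cos ν`, the Gamma integral
gives `‖k‖₁ = |z^α| Γ(a) (Re z)^{-a} ≤ Γ(a) e^{ν|Im α|} (cos ν)^{-a}`.
-/

open MeasureTheory Set Real
open scoped ENNReal

section SchurTest

variable {X Y : Type*} [MeasurableSpace X] [MeasurableSpace Y] {μ : Measure X} {ν : Measure Y}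

theorem ENNReal.sq_lintegral_mul_le_lintegral_mul_lintegral_mul_sq {K φ : Y → ℝ≥0∞}
    (hK : AEMeasurable K ν) (hφ : AEMeasurable φ ν) :
    (∫⁻ s, K s * φ s ∂ν) ^ 2 ≤ (∫⁻ s, K s ∂ν) * ∫⁻ s, K s * φ s ^ 2 ∂ν := by
  have hsqrt_mul_self : ∀ x : ℝ≥0∞, x ^ (1 / 2 : ℝ) * x ^ (1 / 2 : ℝ) = x := fun x => by
    rw [← ENNReal.rpow_add_of_nonneg _ _ (by norm_num) (by norm_num)]; norm_num
  have hsqrt_sq : ∀ x : ℝ≥0∞, (x ^ (1 / 2 : ℝ)) ^ (2 : ℝ) = x := fun x => by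
    rw [← ENNReal.rpow_mul]; norm_num
  have holder := ENNReal.lintegral_mul_le_Lp_mul_Lq ν Real.HolderConjugate.two_two
    (hK.pow_const (1 / 2 : ℝ)) ((hK.pow_const (1 / 2 : ℝ)).mul hφ)
  simp only [Pi.mul_apply, ← mul_assoc, hsqrt_mul_self,
    ENNReal.mul_rpow_of_nonneg _ _ zero_le_two, hsqrt_sq, ENNReal.rpow_two] at holder
  calc (∫⁻ s, K s * φ s ∂ν) ^ 2
      ≤ ((∫⁻ s, K s ∂ν) ^ (1 / 2 : ℝ) * (∫⁻ s, K s * φ s ^ 2 ∂ν) ^ (1 / 2 : ℝ)) ^ 2 := by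
        gcongr
    _ = (∫⁻ s, K s ∂ν) * ∫⁻ s, K s * φ s ^ 2 ∂ν := by
        rw [sq, mul_mul_mul_comm, hsqrt_mul_self, hsqrt_mul_self]

theorem lintegral_sq_lintegral_mul_le_of_forall_lintegral_le [SFinite μ] [SFinite ν]
    {K : X → Y → ℝ≥0∞} (hK : Measurable (Function.uncurry K)) {φ : Y → ℝ≥0∞} (hφ : Measurable φ)
    {A B : ℝ≥0∞} (hrow : ∀ t, ∫⁻ s, K t s ∂ν ≤ A) (hcol : ∀ s, ∫⁻ t, K t s ∂μ ≤ B) :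
    ∫⁻ t, (∫⁻ s, K t s * φ s ∂ν) ^ 2 ∂μ ≤ A * B * ∫⁻ s, φ s ^ 2 ∂ν := by
  have hKφ : Measurable fun p : X × Y => K p.1 p.2 * φ p.2 ^ 2 :=
    hK.mul ((hφ.comp measurable_snd).pow_const 2)
  calc ∫⁻ t, (∫⁻ s, K t s * φ s ∂ν) ^ 2 ∂μ
      ≤ ∫⁻ t, A * ∫⁻ s, K t s * φ s ^ 2 ∂ν ∂μ := lintegral_mono fun t =>
        (ENNReal.sq_lintegral_mul_le_lintegral_mul_lintegral_mul_sq
          hK.of_uncurry_left.aemeasurable hφ.aemeasurable).trans (mul_le_mul_left (hrow t) _)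
    _ = A * ∫⁻ s, (∫⁻ t, K t s ∂μ) * φ s ^ 2 ∂ν := by
        rw [lintegral_const_mul _ hKφ.lintegral_prod_right',
          lintegral_lintegral_swap hKφ.aemeasurable]
        congr 1
        exact lintegral_congr fun s => lintegral_mul_const (φ s ^ 2) hK.of_uncurry_right
    _ ≤ A * ∫⁻ s, B * φ s ^ 2 ∂ν := by gcongr with s; exact hcol s
    _ = A * B * ∫⁻ s, φ s ^ 2 ∂ν := by rw [lintegral_const_mul _ (hφ.pow_const 2), mul_assoc]

end SchurTest

theorem integral_le_of_lintegral_enorm_le {X : Type*} [MeasurableSpace X] {μ : Measure X}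
    {F : X → ℝ} {b : ℝ} (hb : 0 ≤ b) (h : ∫⁻ x, ‖F x‖ₑ ∂μ ≤ ENNReal.ofReal b) :
    ∫ x, F x ∂μ ≤ b :=
  (le_norm_self _).trans <| (norm_integral_le_lintegral_norm F).trans <|
    ENNReal.toReal_le_of_le_ofReal hb (by simpa only [ofReal_norm] using h)

theorem integral_sq_norm_integral_Ioc_mul_le {g f : ℝ → ℂ} (hg : Measurable g) (hf : Measurable f)
    (hfi : IntegrableOn (fun s => ‖f s‖ ^ 2) (Ioi 0)) {C : ℝ} (hC : 0 ≤ C)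
    (hgC : ∫⁻ u in Ioi 0, ‖g u‖ₑ ≤ ENNReal.ofReal C) :
    ∫ t in Ioi (0:ℝ), ‖∫ s in Ioc (0:ℝ) t, g (t - s) * f s‖ ^ 2
      ≤ C ^ 2 * ∫ s in Ioi (0:ℝ), ‖f s‖ ^ 2 := by
  -- `G (t - s)` vanishes for `s > t`: it dominates the `Ioc 0 t` integrand, and both its row and
  -- column integrals are `∫ G`.
  set G : ℝ → ℝ≥0∞ := (Ici 0).indicator fun u => ‖g u‖ₑ
  have hG : Measurable G := hg.enorm.indicator measurableSet_Ici
  have hGC : ∫⁻ u, G u ≤ ENNReal.ofReal C := by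
    rwa [lintegral_indicator measurableSet_Ici, ← setLIntegral_congr Ioi_ae_eq_Ici]
  have hpointwise : ∀ t, ‖∫ s in Ioc 0 t, g (t - s) * f s‖ₑ ≤ ∫⁻ s in Ioi 0, G (t - s) * ‖f s‖ₑ :=
    fun t => calc
      ‖∫ s in Ioc 0 t, g (t - s) * f s‖ₑ ≤ ∫⁻ s in Ioc 0 t, ‖g (t - s) * f s‖ₑ :=
        enorm_integral_le_lintegral_enorm _
      _ = ∫⁻ s in Ioc 0 t, G (t - s) * ‖f s‖ₑ := by
        refine setLIntegral_congr_fun measurableSet_Ioc fun s hs => ?_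
        simp only [G, enorm_mul, indicator_of_mem (show t - s ∈ Ici (0:ℝ) from sub_nonneg.2 hs.2)]
      _ ≤ ∫⁻ s in Ioi 0, G (t - s) * ‖f s‖ₑ := lintegral_mono_set Ioc_subset_Ioi_self
  have hschur := lintegral_sq_lintegral_mul_le_of_forall_lintegral_le
    (μ := volume.restrict (Ioi 0)) (ν := volume.restrict (Ioi 0)) (K := fun t s => G (t - s))
    (hG.comp (measurable_fst.sub measurable_snd)) hf.enorm
    (fun t => (setLIntegral_le_lintegral _ _).trans ((lintegral_sub_left_eq_self G t).trans_le hGC))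
    (fun s => (setLIntegral_le_lintegral _ _).trans ((lintegral_sub_right_eq_self G s).trans_le hGC))
  have hL2 : ∫⁻ s in Ioi 0, ‖f s‖ₑ ^ 2 = ENNReal.ofReal (∫ s in Ioi 0, ‖f s‖ ^ 2) := by
    rw [ofReal_integral_eq_lintegral_ofReal hfi (ae_of_all _ fun s => by positivity)]
    simp only [ENNReal.ofReal_pow (norm_nonneg _), ofReal_norm]
  refine integral_le_of_lintegral_enorm_le (by positivity) ?_
  calc ∫⁻ t in Ioi 0, ‖‖∫ s in Ioc 0 t, g (t - s) * f s‖ ^ 2‖ₑ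
      = ∫⁻ t in Ioi 0, ‖∫ s in Ioc 0 t, g (t - s) * f s‖ₑ ^ 2 := by
        simp only [enorm_pow, enorm_norm]
    _ ≤ ∫⁻ t in Ioi 0, (∫⁻ s in Ioi 0, G (t - s) * ‖f s‖ₑ) ^ 2 := by
        gcongr with t; exact hpointwise t
    _ ≤ ENNReal.ofReal C * ENNReal.ofReal C * ∫⁻ s in Ioi 0, ‖f s‖ₑ ^ 2 := hschur
    _ = ENNReal.ofReal (C ^ 2 * ∫ s in Ioi 0, ‖f s‖ ^ 2) := by
        rw [hL2, ← ENNReal.ofReal_mul hC, ← ENNReal.ofReal_mul (by positivity), sq]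

theorem norm_cpow_le_rpow_mul_exp_of_abs_arg_le {z α : ℂ} {ν : ℝ} (hz : |z.arg| ≤ ν) :
    ‖z ^ α‖ ≤ ‖z‖ ^ α.re * exp (ν * |α.im|) := by
  refine (Complex.norm_cpow_le z α).trans ?_
  rw [div_eq_mul_inv, ← exp_neg]
  gcongr
  calc -(z.arg * α.im) ≤ |z.arg * α.im| := neg_le_abs _
    _ = |z.arg| * |α.im| := abs_mul _ _
    _ ≤ ν * |α.im| := by gcongr

theorem norm_mul_cos_le_re_of_abs_arg_le {z : ℂ} {ν : ℝ} (hz : |z.arg| ≤ ν) (hν : ν ≤ π) :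
    ‖z‖ * cos ν ≤ z.re := by
  rw [← Complex.norm_mul_cos_arg z, ← cos_abs z.arg]
  gcongr
  exact cos_le_cos_of_nonneg_of_le_pi (abs_nonneg _) hν hz

theorem lintegral_rpow_mul_exp_neg_mul_Ioi {a r : ℝ} (ha : 0 < a) (hr : 0 < r) :
    ∫⁻ u in Ioi 0, ENNReal.ofReal (u ^ (a - 1) * exp (-(r * u)))
      = ENNReal.ofReal ((1 / r) ^ a * Gamma a) := by
  have hint : IntegrableOn (fun u : ℝ => u ^ (a - 1) * exp (-(r * u))) (Ioi 0) := by
    simpa only [rpow_one, neg_mul] using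
      integrableOn_rpow_mul_exp_neg_mul_rpow (p := 1) (by linarith) one_pos hr
  rw [← integral_rpow_mul_exp_neg_mul_Ioi ha hr, ofReal_integral_eq_lintegral_ofReal hint]
  filter_upwards [ae_restrict_mem measurableSet_Ioi] with u hu
  exact mul_nonneg (rpow_nonneg hu.le _) (exp_pos _).le

theorem lintegral_enorm_cpow_mul_cpow_mul_exp_le {ν : ℝ} (hν : ν < π / 2) {z : ℂ}
    (hz : |z.arg| ≤ ν) (hre : 0 < z.re) {α : ℂ} (ha : 0 < α.re) :
    ∫⁻ u in Ioi (0:ℝ), ‖(u:ℂ) ^ (α - 1) * z ^ α * Complex.exp (-(u:ℂ) * z)‖ₑ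
      ≤ ENNReal.ofReal (Gamma α.re * exp (ν * |α.im|) / cos ν ^ α.re) := by
  have hcos : 0 < cos ν := cos_pos_of_mem_Ioo ⟨by linarith [abs_nonneg z.arg, pi_pos], hν⟩
  have hnorm : ∀ u ∈ Ioi (0:ℝ), ‖(u:ℂ) ^ (α - 1) * z ^ α * Complex.exp (-(u:ℂ) * z)‖ₑ
      = ENNReal.ofReal ‖z ^ α‖ * ENNReal.ofReal (u ^ (α.re - 1) * exp (-(z.re * u))) := by
    intro u hu
    rw [← ofReal_norm, ← ENNReal.ofReal_mul (norm_nonneg _), norm_mul, norm_mul,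
      Complex.norm_cpow_eq_rpow_re_of_pos hu, Complex.norm_exp]
    congr 1
    simp only [Complex.sub_re, Complex.one_re, Complex.mul_re, Complex.neg_re, Complex.ofReal_re,
      Complex.neg_im, Complex.ofReal_im]
    ring_nf
  rw [setLIntegral_congr_fun measurableSet_Ioi hnorm, lintegral_const_mul' _ _ ENNReal.ofReal_ne_top,
    lintegral_rpow_mul_exp_neg_mul_Ioi ha hre, ← ENNReal.ofReal_mul (norm_nonneg _)]
  refine ENNReal.ofReal_le_ofReal ?_
  have hratio : ‖z‖ / z.re ≤ 1 / cos ν := by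
    rw [div_le_div_iff₀ hre hcos, one_mul]
    exact norm_mul_cos_le_re_of_abs_arg_le hz (by linarith [pi_pos])
  calc ‖z ^ α‖ * ((1 / z.re) ^ α.re * Gamma α.re)
      ≤ ‖z‖ ^ α.re * exp (ν * |α.im|) * ((1 / z.re) ^ α.re * Gamma α.re) := by
        gcongr
        exact norm_cpow_le_rpow_mul_exp_of_abs_arg_le hz
    _ = Gamma α.re * exp (ν * |α.im|) * (‖z‖ / z.re) ^ α.re := by
        rw [div_eq_mul_one_div ‖z‖, mul_rpow (norm_nonneg _) (by positivity)]
        ring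
    _ ≤ Gamma α.re * exp (ν * |α.im|) * (1 / cos ν) ^ α.re := by
        gcongr
    _ = Gamma α.re * exp (ν * |α.im|) / cos ν ^ α.re := by
        rw [div_rpow zero_le_one hcos.le, one_rpow, mul_one_div]

/-- The operator `M_z f(t) = ∫₀^t (t−s)^{α−1} z^α e^{−(t−s)z} f(s) ds` is
bounded on `L²((0,∞), dt; ℂ)` with norm at most `Γ(Re α) e^{ν|Im α|} (cos ν)^{−Re α}`. -/
theorem stmt_8 (ν : ℝ) (hν : ν ∈ Ioo 0 (π / 2)) (z : ℂ)
    (hz : |z.arg| ≤ ν) (hre : 0 < z.re) (α : ℂ) (ha : 0 < α.re) :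
    ∀ f : ℝ → ℂ, Measurable f →
      IntegrableOn (fun s => ‖f s‖ ^ 2) (Ioi 0) →
      ∫ t in Ioi (0:ℝ),
          ‖∫ s in Ioc (0:ℝ) t,
              ((t : ℂ) - s) ^ (α - 1) * z ^ α * Complex.exp (-((t : ℂ) - s) * z) * f s‖ ^ 2
        ≤ (Real.Gamma α.re * Real.exp (ν * |α.im|) / Real.cos ν ^ α.re) ^ 2 *
            ∫ s in Ioi (0:ℝ), ‖f s‖ ^ 2 := by
  intro f hf hfi
  have hcos : 0 < cos ν := cos_pos_of_mem_Ioo ⟨by linarith [hν.1, pi_pos], hν.2⟩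
  have hC : 0 ≤ Gamma α.re * exp (ν * |α.im|) / cos ν ^ α.re := by
    have hΓ := Gamma_pos_of_pos ha
    positivity
  simpa only [Complex.ofReal_sub] using integral_sq_norm_integral_Ioc_mul_le
    (g := fun u : ℝ => (u:ℂ) ^ (α - 1) * z ^ α * Complex.exp (-(u:ℂ) * z)) (by fun_prop) hf hfi hC
    (lintegral_enorm_cpow_mul_cpow_mul_exp_le hν.2 hz hre ha)
end

section
/- Let M > 0, γ ≥ 0, c > 0, R > 0 with 2K > R + γ where K ∈ ℕ, and let a ∈ (0, R], d ≥ 0, t > 0. Then ∫₀^∞ s^{a+γ} e^{−c s} (1 + d^{2m} s² / t²)^{−K} ds/s ≤ C(a, γ, c, K) (1 + d^m / t)^{−a−γ}, where m is a positive integer and C does not depend on d or t. -/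
/-!
Write `p = a + γ` and `x = d^m / t`; the integral is
`∫₀^∞ s^(p-1) e^(-cs) (1 + (xs)²)^(-K) ds`.
Dropping the last factor bounds it by `∫₀^∞ s^(p-1) e^(-cs) ds = Γ(p) c^(-p)`, which is
the right bound for `x ≤ 1`. Dropping the exponential instead and substituting `u = xs`
bounds it by `x^(-p) ∫₀^∞ u^(p-1) (1 + u²)^(-K) du`, finite because `0 < p < 2K`, which is
the right bound for `x ≥ 1`. Both cases combine through `max 1 x ^ (-p) ≤ 2^p (1 + x)^(-p)`.
-/

open MeasureTheory Set Real

lemma one_add_sq_rpow_neg_le_one {K : ℝ} (hK : 0 ≤ K) (u : ℝ) : (1 + u ^ 2) ^ (-K) ≤ 1 :=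
  rpow_le_one_of_one_le_of_nonpos (by nlinarith) (neg_nonpos.mpr hK)

lemma one_add_sq_rpow_neg_le {K : ℝ} (hK : 0 ≤ K) {u : ℝ} (hu : 0 < u) :
    (1 + u ^ 2) ^ (-K) ≤ u ^ (-(2 * K)) := calc
  (1 + u ^ 2) ^ (-K) ≤ (u ^ 2) ^ (-K) :=
    rpow_le_rpow_of_nonpos (by positivity) (by linarith) (neg_nonpos.mpr hK)
  _ = u ^ (-(2 * K)) := by rw [← rpow_natCast, ← rpow_mul hu.le]; push_cast; ring_nf

lemma integrableOn_rpow_mul_one_add_sq_rpow_neg {p K : ℝ} (hp : 0 < p) (hpK : p < 2 * K) :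
    IntegrableOn (fun u : ℝ => u ^ (p - 1) * (1 + u ^ 2) ^ (-K)) (Ioi 0) := by
  have hK : 0 ≤ K := by linarith
  have hmeas : AEStronglyMeasurable (fun u : ℝ => u ^ (p - 1) * (1 + u ^ 2) ^ (-K)) :=
    (by fun_prop : Measurable _).aestronglyMeasurable
  rw [← Ioc_union_Ioi_eq_Ioi zero_le_one, integrableOn_union]
  constructor
  · have hint : IntegrableOn (fun u : ℝ => u ^ (p - 1)) (Ioc 0 1) := by
      have := intervalIntegral.intervalIntegrable_rpow' (a := 0) (b := 1) (by linarith : -1 < p - 1)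
      rwa [intervalIntegrable_iff, uIoc_of_le zero_le_one] at this
    refine hint.mono' hmeas.restrict ?_
    filter_upwards [self_mem_ae_restrict measurableSet_Ioc] with u hu
    have hu0 : 0 < u := hu.1
    rw [norm_of_nonneg (by positivity)]
    exact mul_le_of_le_one_right (by positivity) (one_add_sq_rpow_neg_le_one hK u)
  · have hint : IntegrableOn (fun u : ℝ => u ^ (p - 1 - 2 * K)) (Ioi 1) :=
      integrableOn_Ioi_rpow_of_lt (by linarith) zero_lt_one
    refine hint.mono' hmeas.restrict ?_
    filter_upwards [self_mem_ae_restrict measurableSet_Ioi] with u (hu : 1 < u)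
    have hu0 : 0 < u := by linarith
    rw [norm_of_nonneg (by positivity), sub_eq_add_neg (p - 1), rpow_add hu0]
    gcongr
    exact one_add_sq_rpow_neg_le hK hu0

lemma rpow_sub_one_eq_rpow_mul_mul_rpow {x s : ℝ} (hx : 0 < x) (hs : 0 ≤ s) (p : ℝ) :
    s ^ (p - 1) = x ^ (1 - p) * (x * s) ^ (p - 1) := by
  rw [mul_rpow hx.le hs, ← mul_assoc, ← rpow_add hx]
  norm_num

lemma integrableOn_rpow_mul_comp_mul_left_Ioi {f : ℝ → ℝ} {p x : ℝ} (hx : 0 < x)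
    (hf : IntegrableOn (fun u => u ^ (p - 1) * f u) (Ioi 0)) :
    IntegrableOn (fun s => s ^ (p - 1) * f (x * s)) (Ioi 0) := by
  have hcomp := (integrableOn_Ioi_comp_mul_left_iff (fun u => u ^ (p - 1) * f u) 0 hx).mpr
    (by rwa [mul_zero])
  refine IntegrableOn.congr_fun (hcomp.const_mul (x ^ (1 - p))) (fun s (hs : 0 < s) => ?_)
    measurableSet_Ioi
  rw [rpow_sub_one_eq_rpow_mul_mul_rpow hx hs.le p, mul_assoc]

lemma integral_rpow_mul_comp_mul_left_Ioi (f : ℝ → ℝ) (p : ℝ) {x : ℝ} (hx : 0 < x) :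
    ∫ s in Ioi 0, s ^ (p - 1) * f (x * s) = x ^ (-p) * ∫ u in Ioi 0, u ^ (p - 1) * f u := calc
  ∫ s in Ioi 0, s ^ (p - 1) * f (x * s)
      = ∫ s in Ioi 0, x ^ (1 - p) * ((x * s) ^ (p - 1) * f (x * s)) := by
    refine setIntegral_congr_fun measurableSet_Ioi fun s (hs : 0 < s) => ?_
    rw [rpow_sub_one_eq_rpow_mul_mul_rpow hx hs.le p, mul_assoc]
  _ = x ^ (1 - p) * x⁻¹ * ∫ u in Ioi 0, u ^ (p - 1) * f u := by
    rw [integral_const_mul, integral_comp_mul_left_Ioi (fun u => u ^ (p - 1) * f u) 0 hx,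
      mul_zero, smul_eq_mul, mul_assoc]
  _ = x ^ (-p) * ∫ u in Ioi 0, u ^ (p - 1) * f u := by
    rw [← div_eq_mul_inv, ← rpow_sub_one hx.ne', sub_sub_cancel_left]

lemma max_one_rpow_neg_le {x p : ℝ} (hx : 0 ≤ x) (hp : 0 ≤ p) :
    max 1 x ^ (-p) ≤ 2 ^ p * (1 + x) ^ (-p) := by
  have hmax : 0 < max 1 x := lt_max_of_lt_left one_pos
  have h : (max 1 x)⁻¹ ≤ 2 * (1 + x)⁻¹ := by
    rw [inv_le_comm₀ hmax (by positivity), mul_inv, inv_inv]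
    linarith [le_max_left 1 x, le_max_right 1 x]
  calc max 1 x ^ (-p) = ((max 1 x)⁻¹) ^ p := by rw [rpow_neg hmax.le, inv_rpow hmax.le]
    _ ≤ (2 * (1 + x)⁻¹) ^ p := rpow_le_rpow (by positivity) h hp
    _ = 2 ^ p * (1 + x) ^ (-p) := by
      rw [mul_rpow zero_le_two (by positivity), inv_rpow (by positivity), rpow_neg (by positivity)]

theorem exists_integral_rpow_mul_exp_mul_one_add_sq_rpow_le {p c K : ℝ} (hp : 0 < p)
    (hc : 0 < c) (hpK : p < 2 * K) :
    ∃ C : ℝ, 0 < C ∧ ∀ x : ℝ, 0 ≤ x →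
      ∫ s in Ioi 0, s ^ (p - 1) * exp (-(c * s)) * (1 + (x * s) ^ 2) ^ (-K)
        ≤ C * (1 + x) ^ (-p) := by
  have hK : 0 ≤ K := by linarith
  set A := ∫ u in Ioi (0 : ℝ), u ^ (p - 1) * (1 + u ^ 2) ^ (-K)
  set B := ∫ s in Ioi (0 : ℝ), s ^ (p - 1) * exp (-(c * s))
  have hB : B = (1 / c) ^ p * Gamma p := integral_rpow_mul_exp_neg_mul_Ioi hp hc
  have hB0 : 0 < B := by rw [hB]; have := Gamma_pos_of_pos hp; positivity
  have hBint : IntegrableOn (fun s : ℝ => s ^ (p - 1) * exp (-(c * s))) (Ioi 0) :=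
    .of_integral_ne_zero hB0.ne'
  refine ⟨2 ^ p * max B A, by positivity, fun x hx => ?_⟩
  set I := ∫ s in Ioi (0 : ℝ), s ^ (p - 1) * exp (-(c * s)) * (1 + (x * s) ^ 2) ^ (-K)
  have hI_le_B : I ≤ B := by
    refine integral_mono_of_nonneg ?_ hBint ?_ <;>
      filter_upwards [self_mem_ae_restrict measurableSet_Ioi] with s (hs : 0 < s)
    · positivity
    · exact mul_le_of_le_one_right (by positivity) (one_add_sq_rpow_neg_le_one hK _)
  have hI_le_A : 0 < x → I ≤ x ^ (-p) * A := fun hx0 => calc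
    I ≤ ∫ s in Ioi 0, s ^ (p - 1) * (1 + (x * s) ^ 2) ^ (-K) := by
      refine integral_mono_of_nonneg ?_ ?_ ?_
      · filter_upwards [self_mem_ae_restrict measurableSet_Ioi] with s (hs : 0 < s)
        positivity
      · exact integrableOn_rpow_mul_comp_mul_left_Ioi hx0
          (integrableOn_rpow_mul_one_add_sq_rpow_neg hp hpK)
      · filter_upwards [self_mem_ae_restrict measurableSet_Ioi] with s (hs : 0 < s)
        rw [mul_right_comm]
        refine mul_le_of_le_one_right (by positivity) ?_
        exact exp_le_one_iff.mpr (by nlinarith)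
    _ = x ^ (-p) * A := integral_rpow_mul_comp_mul_left_Ioi (fun u => (1 + u ^ 2) ^ (-K)) p hx0
  have hI_le_max : I ≤ max B A * max 1 x ^ (-p) := by
    rcases le_total x 1 with hx1 | hx1
    · rw [max_eq_left hx1, one_rpow, mul_one]
      exact hI_le_B.trans (le_max_left B A)
    · rw [max_eq_right hx1, mul_comm]
      exact (hI_le_A (by linarith)).trans
        (mul_le_mul_of_nonneg_left (le_max_right B A) (by positivity))
  calc I ≤ max B A * max 1 x ^ (-p) := hI_le_max
    _ ≤ max B A * (2 ^ p * (1 + x) ^ (-p)) := by gcongr; exact max_one_rpow_neg_le hx hp.le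
    _ = 2 ^ p * max B A * (1 + x) ^ (-p) := by ring

theorem stmt_9_general (m : ℕ) (γ c R : ℝ) (hγ : 0 ≤ γ) (hc : 0 < c)
    (K : ℕ) (hK : R + γ < 2 * K) (a : ℝ) (ha : a ∈ Ioc (0:ℝ) R) :
    ∃ C : ℝ, 0 < C ∧ ∀ d t : ℝ, 0 ≤ d → 0 < t →
      ∫ s in Ioi (0:ℝ),
          s ^ (a + γ) * Real.exp (-c * s) * (1 + d ^ (2 * m) * s ^ 2 / t ^ 2) ^ (-(K:ℝ)) / s
        ≤ C * (1 + d ^ m / t) ^ (-(a + γ)) := by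
  obtain ⟨ha0, haR⟩ := ha
  obtain ⟨C, hC, hbound⟩ := exists_integral_rpow_mul_exp_mul_one_add_sq_rpow_le
    (p := a + γ) (K := K) (by linarith) hc (by linarith)
  refine ⟨C, hC, fun d t hd ht => ?_⟩
  convert hbound (d ^ m / t) (by positivity) using 1
  refine setIntegral_congr_fun measurableSet_Ioi fun s (hs : 0 < s) => ?_
  have hsq : 1 + d ^ (2 * m) * s ^ 2 / t ^ 2 = 1 + (d ^ m / t * s) ^ 2 := by rw [pow_mul']; ring
  rw [hsq, rpow_sub_one hs.ne', neg_mul]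
  ring

/-- Key integral estimate: for `2K > R + γ`, `a ∈ (0, R]`, `d ≥ 0`, `t > 0`,
`∫₀^∞ s^{a+γ} e^{−cs} (1 + d^{2m} s²/t²)^{−K} ds/s ≤ C (1 + d^m/t)^{−a−γ}`,
with `C` independent of `d` and `t`. -/
theorem stmt_9 (m : ℕ) (hm : 0 < m) (γ c R : ℝ) (hγ : 0 ≤ γ) (hc : 0 < c)
    (hR : 0 < R) (K : ℕ) (hK : R + γ < 2 * K) (a : ℝ) (ha : a ∈ Ioc (0:ℝ) R) :
    ∃ C : ℝ, 0 < C ∧ ∀ d t : ℝ, 0 ≤ d → 0 < t →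
      ∫ s in Ioi (0:ℝ),
          s ^ (a + γ) * Real.exp (-c * s) * (1 + d ^ (2 * m) * s ^ 2 / t ^ 2) ^ (-(K:ℝ)) / s
        ≤ C * (1 + d ^ m / t) ^ (-(a + γ)) :=
  stmt_9_general m γ c R hγ hc K hK a ha
end
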